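/- For any fixed integer n ≥ 2, the sequence m ↦ Φ⁽ⁿ⁾(m)/m is strictly decreasing in m over the positive integers and converges to 1 as m → ∞. -/

import Mathlib

/-!
For `x = Φ⁽ⁿ⁾(m)` the geometric-sum identity turns `x ^ n = m (1 + x + ⋯ + x ^ (n-1))` into
`x ^ n (m + 1 - x) = m`. Since `x > m`, the sum is at least `1 + x > m + 1`, so `x ^ n > m (m + 1)`
and the gap `m + 1 - x = m / x ^ n` lies strictly between `0` and `1 / (m + 1)`. Monotonicity
follows from `Φ(m+1) m < (m + 2) m = (m + 1)² - 1 < Φ(m) (m + 1)`, and `m < Φ(m) < m + 1`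
squeezes `Φ(m) / m` to `1`.
-/

open Finset Filter Topology

theorem pow_mul_add_one_sub_eq_of_pow_eq_mul_geom_sum {R : Type*} [CommRing R] {x m : R} {n : ℕ}
    (h : x ^ n = m * ∑ k ∈ range n, x ^ k) : x ^ n * (m + 1 - x) = m := by
  linear_combination (1 - x) * h - m * geom_sum_mul x n

section RealRoot

variable {x m : ℝ} {n : ℕ}

theorem pow_add_pow_le_geom_sum {i j : ℕ} (hx : 0 ≤ x) (hi : i < n) (hj : j < n) (hij : i ≠ j) :
    x ^ i + x ^ j ≤ ∑ k ∈ range n, x ^ k :=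
  add_le_sum (fun k _ => pow_nonneg hx k) (mem_range.2 hi) (mem_range.2 hj) hij

theorem lt_of_pow_eq_mul_geom_sum (hn : 2 ≤ n) (hm : 0 < m) (hx : 0 ≤ x)
    (h : x ^ n = m * ∑ k ∈ range n, x ^ k) : m < x := by
  have hsum : 1 + x ^ (n - 1) ≤ ∑ k ∈ range n, x ^ k := by
    simpa using pow_add_pow_le_geom_sum hx (i := 0) (j := n - 1) (by omega) (by omega) (by omega)
  have hpow : x ^ n = x * x ^ (n - 1) := by rw [← pow_succ', Nat.sub_add_cancel (by omega)]
  have : m * x ^ (n - 1) < x * x ^ (n - 1) := by nlinarith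
  exact lt_of_mul_lt_mul_right this (pow_nonneg hx _)

theorem mul_add_one_lt_pow_of_pow_eq_mul_geom_sum (hn : 2 ≤ n) (hm : 0 < m) (hx : 0 ≤ x)
    (h : x ^ n = m * ∑ k ∈ range n, x ^ k) : m * (m + 1) < x ^ n := by
  have hsum : 1 + x ≤ ∑ k ∈ range n, x ^ k := by
    simpa using pow_add_pow_le_geom_sum hx (i := 0) (j := 1) (by omega) (by omega) (by omega)
  have := lt_of_pow_eq_mul_geom_sum hn hm hx h
  rw [h]
  nlinarith

theorem bounds_of_pow_eq_mul_geom_sum (hn : 2 ≤ n) (hm : 0 < m) (hx : 0 ≤ x)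
    (h : x ^ n = m * ∑ k ∈ range n, x ^ k) : m + 1 - 1 / (m + 1) < x ∧ x < m + 1 := by
  have key := pow_mul_add_one_sub_eq_of_pow_eq_mul_geom_sum h
  have hbig := mul_add_one_lt_pow_of_pow_eq_mul_geom_sum hn hm hx h
  have hxn : 0 < x ^ n := pow_pos (hm.trans (lt_of_pow_eq_mul_geom_sum hn hm hx h)) n
  have hgap : m + 1 - x = m / x ^ n := by
    rw [eq_div_iff hxn.ne', mul_comm, key]
  have hgap_pos : 0 < m + 1 - x := hgap ▸ div_pos hm hxn
  refine ⟨?_, by linarith⟩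
  have : m / x ^ n < 1 / (m + 1) := by
    rw [div_lt_div_iff₀ hxn (by positivity)]
    linarith
  linarith

end RealRoot

theorem tendsto_div_natCast_nhds_one {g : ℕ → ℝ}
    (hg : ∀ᶠ m : ℕ in atTop, (m : ℝ) ≤ g m ∧ g m ≤ m + 1) :
    Tendsto (fun m : ℕ => g m / m) atTop (𝓝 1) := by
  have hupper : Tendsto (fun m : ℕ => 1 + 1 / (m : ℝ)) atTop (𝓝 1) := by
    simpa using tendsto_one_div_atTop_nhds_zero_nat.const_add (1 : ℝ)
  refine tendsto_of_tendsto_of_tendsto_of_le_of_le' tendsto_const_nhds hupper ?_ ?_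
  all_goals
    filter_upwards [hg, eventually_gt_atTop 0] with m ⟨hlo, hhi⟩ hm
    have hm : (0 : ℝ) < m := Nat.cast_pos.2 hm
  · rwa [le_div_iff₀ hm, one_mul]
  · rw [div_le_iff₀ hm, add_mul, one_div_mul_cancel hm.ne']
    linarith

theorem stmt_15 (n : ℕ) (hn : 2 ≤ n) (f : ℕ → ℝ)
    (hf : ∀ m : ℕ, 1 ≤ m → 0 < f m ∧
      (f m) ^ n - (m : ℝ) * ∑ k ∈ Finset.range n, (f m) ^ k = 0) :
    (∀ m : ℕ, 1 ≤ m → f (m + 1) / ((m : ℝ) + 1) < f m / (m : ℝ)) ∧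
    Filter.Tendsto (fun m : ℕ => f m / (m : ℝ)) Filter.atTop (nhds 1) := by
  have bounds (m : ℕ) (hm : 1 ≤ m) :
      (m : ℝ) + 1 - 1 / ((m : ℝ) + 1) < f m ∧ f m < (m : ℝ) + 1 := by
    obtain ⟨hpos, heq⟩ := hf m hm
    exact bounds_of_pow_eq_mul_geom_sum hn (by positivity) hpos.le (sub_eq_zero.1 heq)
  refine ⟨fun m hm => ?_, tendsto_div_natCast_nhds_one ?_⟩
  · have hm' : (0 : ℝ) < m := by positivity
    obtain ⟨hlo, -⟩ := bounds m hm
    obtain ⟨-, hhi⟩ := bounds (m + 1) (by omega)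
    push_cast at hhi
    have : 1 / ((m : ℝ) + 1) * ((m : ℝ) + 1) = 1 := one_div_mul_cancel (by positivity)
    rw [div_lt_div_iff₀ (by positivity) hm']
    nlinarith
  · filter_upwards [eventually_ge_atTop 1] with m (hm : 1 ≤ m)
    obtain ⟨hlo, hhi⟩ := bounds m hm
    have : 1 / ((m : ℝ) + 1) ≤ 1 := by
      rw [div_le_one (by positivity)]; simp
    constructor <;> linarith
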